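/- Guessing-probability bound on the recycled basis key: in an execution of the authentication protocol, if Θ′ equals a fresh uniform sample from C when Bob rejects (D=0) and equals Θ when he accepts (D=1), then Guess(Θ′|T D C) ≤ 1/|C| + Guess(Θ|E), where T is the classical tag (independent of Θ given the rest by message-independence of the MAC), C is Eve's post-execution quantum system obtained by processing T, the transmitted qubits B∘, and E, and the qubits B∘ are in a maximally mixed state independent of (Θ, E). -/

import Mathlib

open Matrix BigOperators Kronecker
open scoped ComplexOrder

/-- Operator (spectral) norm of a complex matrix. -/
noncomputable def opNorm {E : Type} [Fintype E] [DecidableEq E] (A : Matrix E E ℂ) : ℝ :=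
  ‖(Matrix.toEuclideanCLM (𝕜 := ℂ) A : EuclideanSpace ℂ E →L[ℂ] EuclideanSpace ℂ E)‖

/-- An orthogonal projection. -/
def IsProjection {E : Type} [Fintype E] [DecidableEq E] (P : Matrix E E ℂ) : Prop :=
  P.IsHermitian ∧ P * P = P

/-- A cq-state, given as the family of (subnormalized) conditional operators
`ρ x = P_X(x) • ρ_E^x`; each is PSD and the traces sum to 1. -/
def IsCQState {X E : Type} [Fintype X] [Fintype E] (ρ : X → Matrix E E ℂ) : Prop :=
  (∀ x, (ρ x).PosSemidef) ∧ ∑ x, (ρ x).trace = 1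

/-- A POVM with outcomes in `X` on the system `E`. -/
def IsPOVM {X E : Type} [Fintype X] [Fintype E] [DecidableEq E] (M : X → Matrix E E ℂ) : Prop :=
  (∀ x, (M x).PosSemidef) ∧ ∑ x, M x = 1

/-- The guessing probability `Guess(X|E)` of the classical value of a cq-state:
the supremum over POVMs of the probability of the measurement outcome being `X`. -/
noncomputable def guessProb {X E : Type} [Fintype X] [Fintype E] [DecidableEq E]
    (ρ : X → Matrix E E ℂ) : ℝ :=
  sSup {g | ∃ M : X → Matrix E E ℂ, IsPOVM M ∧ g = (∑ x, (M x * ρ x).trace).re}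

/-- The guessing probability `Guess(X|ZE)` with additional classical side information `Z`:
the supremum over measurements of `E` controlled by `Z`. -/
noncomputable def guessProbC {X Z E : Type} [Fintype X] [Fintype Z] [Fintype E] [DecidableEq E]
    (ρ : X → Z → Matrix E E ℂ) : ℝ :=
  sSup {g | ∃ M : Z → X → Matrix E E ℂ, (∀ z, IsPOVM (M z)) ∧
    g = (∑ x, ∑ z, (M z x * ρ x z).trace).re}

/-- Trace norm `‖A‖₁ = tr √(AᴴA)`. -/
noncomputable def traceNorm {E : Type} [Fintype E] [DecidableEq E] (A : Matrix E E ℂ) : ℝ :=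
  (((Matrix.isHermitian_conjTranspose_mul_self A).eigenvectorUnitary.1 *
    Matrix.diagonal (((↑) : ℝ → ℂ) ∘ (Real.sqrt ·) ∘ (Matrix.isHermitian_conjTranspose_mul_self A).eigenvalues) *
    (star (Matrix.isHermitian_conjTranspose_mul_self A).eigenvectorUnitary : Matrix E E ℂ)).trace).re

/-- A CPTP map between matrix algebras: completely positive (all finite ampliations
are positivity-preserving) and trace-preserving. -/
def IsCPTP {E F : Type} [Fintype E] [DecidableEq E] [Fintype F] [DecidableEq F]
    (Q : Matrix E E ℂ →ₗ[ℂ] Matrix F F ℂ) : Prop :=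
  (∀ k : ℕ, ∀ ρ : Matrix (E × Fin k) (E × Fin k) ℂ, ρ.PosSemidef →
    (Matrix.of fun p q : F × Fin k =>
      Q (Matrix.of fun a b => ρ (a, p.2) (b, q.2)) p.1 q.1).PosSemidef) ∧
  ∀ ρ, (Q ρ).trace = ρ.trace

/-- The BB84 state vector `H^θ |x⟩` on `n` qubits. -/
noncomputable def bb84v {n : ℕ} (θ x : Fin n → ZMod 2) : (Fin n → ZMod 2) → ℂ :=
  fun y => ∏ i, (if θ i = 0 then (if y i = x i then 1 else 0)
    else ((-1 : ℂ) ^ ((x i).val * (y i).val) / Real.sqrt 2))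

/-- The rank-one projection `H^θ |x⟩⟨x| H^θ`. -/
noncomputable def bb84proj {n : ℕ} (θ x : Fin n → ZMod 2) :
    Matrix (Fin n → ZMod 2) (Fin n → ZMod 2) ℂ :=
  Matrix.vecMulVec (bb84v θ x) (fun y => star (bb84v θ x y))

/-- Partial trace over the first tensor factor. -/
noncomputable def ptr {A B : Type} [Fintype A] (M : Matrix (A × B) (A × B) ℂ) :
    Matrix B B ℂ :=
  Matrix.of fun b b' => ∑ a, M (a, b) (a, b')

/-- The Hamming ball of radius `φ·n` around `0` in `{0,1}^n`. -/
noncomputable def hammingBall (n : ℕ) (φ : ℝ) : Finset (Fin n → ZMod 2) :=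
  @Finset.filter _ (fun e => (hammingDist e (0 : Fin n → ZMod 2) : ℝ) ≤ φ * n)
    (Classical.decPred _) Finset.univ

/-- Binary entropy in bits. -/
noncomputable def binEnt (φ : ℝ) : ℝ := Real.binEntropy φ / Real.log 2

/-- Message-independence of a keyed hash function: the distribution of `H(K,x)` for
uniform `K` does not depend on `x`. -/
def MessageIndependent {K X Y : Type} [Fintype K] [DecidableEq Y] (H : K → X → Y) : Prop :=
  ∀ x x' y, (Finset.univ.filter fun k => H k x = y).card =
    (Finset.univ.filter fun k => H k x' = y).card

/-- Uniformity: `H(K,x)` is uniformly distributed on `Y`, independently of `x`. -/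
def UniformHash {K X Y : Type} [Fintype K] [Fintype Y] [DecidableEq Y] (H : K → X → Y) : Prop :=
  (∀ x x' y, (Finset.univ.filter fun k => H k x = y).card =
    (Finset.univ.filter fun k => H k x' = y).card) ∧
  ∀ x y, (Finset.univ.filter fun k => H k x = y).card * Fintype.card Y = Fintype.card K

/-- `δ(K, U_K | Y E)`: trace distance of a ccq-state `ρ_{KYE}` (classical `K`, `Y`) from the
corresponding state with `K` replaced by a fresh uniform key. -/
noncomputable def deltaKeyUniform {K Y E : Type} [Fintype K] [Fintype Y] [Fintype E]
    [DecidableEq E] (ρ : K → Y → Matrix E E ℂ) : ℝ :=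
  (1/2) * ∑ k : K, ∑ y : Y, traceNorm (ρ k y - (Fintype.card K : ℝ)⁻¹ • ∑ k', ρ k' y)

/-- `ν`-key-privacy of a keyed hash function `H`: for every state `ρ_{KXYE}` with
`ρ_{KX} = μ_K ⊗ ρ_X`, `Y = H(K,X)` and Markov chain `K ↔ XY ↔ E`,
the key is `ν/2·√(Guess(X|YE)·|Y|)`-close to uniform given `Y` and `E`. -/
def KeyPrivacy {K X Y : Type} [Fintype K] [Fintype X] [Fintype Y] [DecidableEq Y]
    (ν : ℝ) (H : K → X → Y) : Prop :=
  ∀ (E : Type) [Fintype E] [DecidableEq E], ∀ ρ : K → X → Matrix E E ℂ,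
    (∀ k x, (ρ k x).PosSemidef) →
    (∑ k, ∑ x, (ρ k x).trace) = 1 →
    (∀ k x, (ρ k x).trace = (Fintype.card K : ℂ)⁻¹ * ∑ k', (ρ k' x).trace) →
    (∃ (p : K → X → ℝ) (σ : X → Y → Matrix E E ℂ), (∀ k x, 0 ≤ p k x) ∧
      ∀ k x, ρ k x = p k x • σ x (H k x)) →
    deltaKeyUniform (fun k y => ∑ x, if H k x = y then ρ k x else 0) ≤
      (ν/2) * Real.sqrt (guessProbC (fun x y => ∑ k, if H k x = y then ρ k x else 0) *
        (Fintype.card Y))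

/-!
If Bob rejects, `Θ'` is a fresh uniform element of the code `𝒞`, independent of everything else,
so whatever Eve measures that branch contributes at most `1/|𝒞|`. If he accepts, `Θ' = Θ`. Eve's
attack sees the qubits `B∘` only as a maximally mixed state and the tag only through its
distribution, so given `Θ = θ` the branch is a trace non-increasing family of positive maps applied
to `ρ_E^θ`, followed by the effects `V_θ ⊗ M_θ` of Bob's acceptance and Eve's guess `θ`. These
effects sum over `θ` to at most `1`; pulled back along the adjoint maps they form a sub-POVM on
`E`, so the branch contributes at most `Guess(Θ|E)`.
-/

open scoped MatrixOrder

namespace Matrix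

lemma kronecker_sum {l n ι : Type*} (s : Finset ι) (A : Matrix l l ℂ) (f : ι → Matrix n n ℂ) :
    A ⊗ₖ (∑ i ∈ s, f i) = ∑ i ∈ s, A ⊗ₖ f i :=
  map_sum (kroneckerBilinear (R := ℂ) A) f s

variable {n : Type*} [Fintype n]

lemma trace_mul_vecMulVec_star (A : Matrix n n ℂ) (x : n → ℂ) :
    (A * vecMulVec x (star x)).trace = star x ⬝ᵥ (A *ᵥ x) := by
  simp only [trace, diag, mul_apply, vecMulVec_apply, dotProduct, mulVec, Pi.star_apply,
    Finset.mul_sum]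
  exact Finset.sum_congr rfl fun a _ => Finset.sum_congr rfl fun b _ => by ring

lemma PosSemidef.trace_mul_nonneg {A B : Matrix n n ℂ} (hA : A.PosSemidef) (hB : B.PosSemidef) :
    0 ≤ (A * B).trace := by
  obtain ⟨k, w, rfl⟩ := posSemidef_iff_eq_sum_vecMulVec.mp hB
  rw [Finset.mul_sum, trace_sum]
  exact Finset.sum_nonneg fun i _ =>
    trace_mul_vecMulVec_star A (w i) ▸ hA.dotProduct_mulVec_nonneg (w i)

lemma trace_mul_le_trace_mul_of_le {A B ρ : Matrix n n ℂ} (hAB : A ≤ B) (hρ : ρ.PosSemidef) :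
    (A * ρ).trace ≤ (B * ρ).trace := by
  have := PosSemidef.trace_mul_nonneg (le_iff.mp hAB) hρ
  rwa [sub_mul, trace_sub, sub_nonneg] at this

lemma kronecker_le_kronecker_left {l : Type*} [Fintype l] {A B : Matrix l l ℂ}
    {C : Matrix n n ℂ} (hAB : A ≤ B) (hC : C.PosSemidef) : A ⊗ₖ C ≤ B ⊗ₖ C := by
  have h := (le_iff.mp hAB).kronecker hC
  rwa [show (B - A) ⊗ₖ C = B ⊗ₖ C - A ⊗ₖ C from
    LinearMap.map_sub₂ (kroneckerBilinear (R := ℂ)) B A C] at h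

variable [DecidableEq n]

lemma posSemidef_of_forall_trace_mul_nonneg {A : Matrix n n ℂ}
    (h : ∀ ρ : Matrix n n ℂ, ρ.PosSemidef → 0 ≤ (A * ρ).trace) : A.PosSemidef := by
  -- over `ℂ`, real quadratic forms already force `A` to be Hermitian
  rw [← isPositive_toEuclideanLin_iff, LinearMap.isPositive_iff_complex]
  intro x
  have hx := trace_mul_vecMulVec_star A x ▸ h _ (posSemidef_vecMulVec_self_star x)
  have hreal : star (star x.ofLp ⬝ᵥ (A *ᵥ x.ofLp)) = star x.ofLp ⬝ᵥ (A *ᵥ x.ofLp) :=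
    Complex.conj_eq_iff_im.mpr (Complex.nonneg_iff.mp hx).2.symm
  have hinner : inner ℂ (A.toEuclideanLin x) x = star x.ofLp ⬝ᵥ (A *ᵥ x.ofLp) := by
    rw [EuclideanSpace.inner_eq_star_dotProduct, dotProduct_comm, star_dotProduct, ← hreal]
    rfl
  rw [hinner]
  exact ⟨Complex.conj_eq_iff_re.mp hreal, (Complex.nonneg_iff.mp hx).1⟩

end Matrix

lemma trace_ptr {A B : Type} [Fintype A] [Fintype B] (X : Matrix (A × B) (A × B) ℂ) :
    (ptr X).trace = X.trace := by
  simp only [ptr, Matrix.trace, Matrix.diag, Matrix.of_apply, Fintype.sum_prod_type]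
  exact Finset.sum_comm

lemma trace_mul_ptr {A B : Type} [Fintype A] [DecidableEq A] [Fintype B]
    (M : Matrix B B ℂ) (X : Matrix (A × B) (A × B) ℂ) :
    (M * ptr X).trace = (((1 : Matrix A A ℂ) ⊗ₖ M) * X).trace := by
  simp only [ptr, Matrix.trace, Matrix.diag, Matrix.mul_apply, Matrix.of_apply,
    Matrix.kroneckerMap_apply, Matrix.one_apply, Fintype.sum_prod_type, ite_mul, one_mul,
    zero_mul, Finset.mul_sum, Finset.sum_ite_irrel, Finset.sum_const_zero, Finset.sum_ite_eq,
    Finset.mem_univ, if_true]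
  calc _ = ∑ b, ∑ a, ∑ b', M b b' * X (a, b') (a, b) :=
        Finset.sum_congr rfl fun b _ => Finset.sum_comm
    _ = _ := Finset.sum_comm

section Quantum

variable {X E F : Type} [Fintype X] [Fintype E] [DecidableEq E] [Fintype F] [DecidableEq F]

lemma IsPOVM.le_one {M : X → Matrix E E ℂ} (hM : IsPOVM M) (x : X) : M x ≤ 1 :=
  hM.2 ▸ Finset.single_le_sum (fun y _ => (hM.1 y).nonneg) (Finset.mem_univ x)

lemma IsPOVM.sum_trace_mul {M : X → Matrix E E ℂ} (hM : IsPOVM M) (S : Matrix E E ℂ) :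
    ∑ x, (M x * S).trace = S.trace := by
  rw [← Matrix.trace_sum, ← Finset.sum_mul, hM.2, one_mul]

lemma IsCPTP.posSemidef_map {Q : Matrix E E ℂ →ₗ[ℂ] Matrix F F ℂ} (hQ : IsCPTP Q)
    {ρ : Matrix E E ℂ} (hρ : ρ.PosSemidef) : (Q ρ).PosSemidef :=
  (hQ.1 1 (ρ.submatrix Prod.fst Prod.fst) (hρ.submatrix Prod.fst)).submatrix fun f => (f, 0)

end Quantum

section Guessing

variable {X E : Type} [Fintype X] [Fintype E] [DecidableEq E]

lemma IsCQState.sum_trace_mul_le_one {ρ : X → Matrix E E ℂ} (hρ : IsCQState ρ)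
    {W : X → Matrix E E ℂ} (hW : ∀ x, W x ≤ 1) : ∑ x, (W x * ρ x).trace ≤ 1 :=
  hρ.2 ▸ Finset.sum_le_sum fun x _ => by
    simpa using Matrix.trace_mul_le_trace_mul_of_le (hW x) (hρ.1 x)

lemma IsCQState.re_sum_trace_mul_le_guessProb {ρ : X → Matrix E E ℂ} (hρ : IsCQState ρ)
    {M : X → Matrix E E ℂ} (hM : IsPOVM M) : (∑ x, (M x * ρ x).trace).re ≤ guessProb ρ := by
  refine le_csSup ⟨1, ?_⟩ ⟨M, hM, rfl⟩
  rintro g ⟨N, hN, rfl⟩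
  simpa using (Complex.le_def.mp (hρ.sum_trace_mul_le_one hN.le_one)).1

lemma IsCQState.guessProb_nonneg {ρ : X → Matrix E E ℂ} (hρ : IsCQState ρ) :
    0 ≤ guessProb ρ := by
  refine Real.sSup_nonneg fun g ⟨M, hM, hg⟩ => hg ▸ ?_
  exact (Complex.nonneg_iff.mp (Finset.sum_nonneg fun x _ =>
    (hM.1 x).trace_mul_nonneg (hρ.1 x))).1

/-- A sub-POVM becomes a POVM once the missing effect is added to an arbitrary outcome. -/
lemma IsCQState.re_sum_trace_mul_le_guessProb_of_sum_le_one {ρ : X → Matrix E E ℂ}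
    (hρ : IsCQState ρ) {W : X → Matrix E E ℂ} (hW : ∀ x, (W x).PosSemidef)
    (hW1 : ∑ x, W x ≤ 1) : (∑ x, (W x * ρ x).trace).re ≤ guessProb ρ := by
  classical
  cases isEmpty_or_nonempty X with
  | inl _ => simpa using hρ.guessProb_nonneg
  | inr h =>
    obtain ⟨x₀⟩ := h
    set S : X → Matrix E E ℂ := Pi.single x₀ (1 - ∑ x, W x)
    have hS : ∀ x, (S x).PosSemidef := by
      intro x
      by_cases hx : x = x₀
      · subst hx; simpa [S] using Matrix.le_iff.mp hW1
      · simp [S, hx, Matrix.PosSemidef.zero]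
    have hN : IsPOVM (W + S) :=
      ⟨fun x => (hW x).add (hS x), by simp [S, Finset.sum_add_distrib]⟩
    refine le_trans ?_ (hρ.re_sum_trace_mul_le_guessProb hN)
    exact (Complex.le_def.mp (Finset.sum_le_sum fun x _ => Matrix.trace_mul_le_trace_mul_of_le
      (le_add_of_nonneg_right (hS x).nonneg) (hρ.1 x))).1

end Guessing

section Instrument

variable {X Z E F : Type} [Fintype X] [Fintype Z] [Fintype E] [Fintype F]

def IsSubInstrument (Φ : Z → Matrix E E ℂ →ₗ[ℂ] Matrix F F ℂ) : Prop :=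
  (∀ z ρ, ρ.PosSemidef → (Φ z ρ).PosSemidef) ∧ ∀ ρ, ρ.PosSemidef → ∑ z, (Φ z ρ).trace ≤ ρ.trace

lemma IsSubInstrument.sum_trace_mul_le_one [DecidableEq F]
    {Φ : Z → Matrix E E ℂ →ₗ[ℂ] Matrix F F ℂ} (hΦ : IsSubInstrument Φ)
    {ρ : X → Matrix E E ℂ} (hρ : IsCQState ρ) {A : Z → X → Matrix F F ℂ} (hA : ∀ z x, A z x ≤ 1) :
    ∑ z, ∑ x, (A z x * Φ z (ρ x)).trace ≤ 1 :=
  calc ∑ z, ∑ x, (A z x * Φ z (ρ x)).trace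
      ≤ ∑ x, ∑ z, (Φ z (ρ x)).trace := by
        rw [Finset.sum_comm]
        exact Finset.sum_le_sum fun x _ => Finset.sum_le_sum fun z _ => by
          simpa using Matrix.trace_mul_le_trace_mul_of_le (hA z x) (hΦ.1 z _ (hρ.1 x))
    _ ≤ ∑ x, (ρ x).trace := Finset.sum_le_sum fun x _ => hΦ.2 _ (hρ.1 x)
    _ = 1 := hρ.2

variable [DecidableEq E]

/-- The Heisenberg-picture adjoint of `Φ` with respect to the pairing `(A, B) ↦ tr (A * B)`. -/
noncomputable def dualMap (Φ : Matrix E E ℂ →ₗ[ℂ] Matrix F F ℂ) (G : Matrix F F ℂ) :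
    Matrix E E ℂ :=
  Matrix.of fun a b => (G * Φ (Matrix.single b a 1)).trace

lemma trace_dualMap_mul (Φ : Matrix E E ℂ →ₗ[ℂ] Matrix F F ℂ) (G : Matrix F F ℂ)
    (ρ : Matrix E E ℂ) : (dualMap Φ G * ρ).trace = (G * Φ ρ).trace := by
  conv_rhs => rw [Matrix.matrix_eq_sum_single ρ]
  simp only [map_sum, Finset.mul_sum, Matrix.trace_sum]
  rw [Matrix.trace, Finset.sum_comm]
  refine Finset.sum_congr rfl fun b _ => ?_
  simp only [Matrix.diag, Matrix.mul_apply]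
  refine Finset.sum_congr rfl fun a _ => ?_
  have hsingle : Matrix.single a b (ρ a b) = ρ a b • Matrix.single a b 1 := by
    rw [Matrix.smul_single, smul_eq_mul, mul_one]
  rw [hsingle, map_smul, Matrix.mul_smul, Matrix.trace_smul, smul_eq_mul, mul_comm]
  rfl

lemma Matrix.PosSemidef.dualMap {Φ : Matrix E E ℂ →ₗ[ℂ] Matrix F F ℂ}
    (hΦ : ∀ ρ, ρ.PosSemidef → (Φ ρ).PosSemidef) {G : Matrix F F ℂ} (hG : G.PosSemidef) :
    (dualMap Φ G).PosSemidef :=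
  Matrix.posSemidef_of_forall_trace_mul_nonneg fun ρ hρ =>
    trace_dualMap_mul Φ G ρ ▸ hG.trace_mul_nonneg (hΦ ρ hρ)

lemma IsSubInstrument.re_sum_trace_mul_le_guessProb [DecidableEq F]
    {Φ : Z → Matrix E E ℂ →ₗ[ℂ] Matrix F F ℂ} (hΦ : IsSubInstrument Φ)
    {ρ : X → Matrix E E ℂ} (hρ : IsCQState ρ) {G : Z → X → Matrix F F ℂ}
    (hG : ∀ z x, (G z x).PosSemidef) (hG1 : ∀ z, ∑ x, G z x ≤ 1) :
    (∑ x, ∑ z, (G z x * Φ z (ρ x)).trace).re ≤ guessProb ρ := by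
  set W : X → Matrix E E ℂ := fun x => ∑ z, dualMap (Φ z) (G z x)
  have hW : ∀ x, (W x).PosSemidef := fun x =>
    Matrix.posSemidef_sum _ fun z _ => (hG z x).dualMap (hΦ.1 z)
  have hW1 : ∑ x, W x ≤ 1 := by
    refine Matrix.le_iff.mpr (Matrix.posSemidef_of_forall_trace_mul_nonneg fun σ hσ => ?_)
    have hσ' : ∑ z, ((∑ x, G z x) * Φ z σ).trace ≤ σ.trace :=
      (Finset.sum_le_sum fun z _ => by
        simpa using Matrix.trace_mul_le_trace_mul_of_le (hG1 z) (hΦ.1 z σ hσ)).trans (hΦ.2 σ hσ)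
    simp only [W, Matrix.sub_mul, Matrix.trace_sub, Finset.sum_mul, Matrix.trace_sum,
      trace_dualMap_mul, one_mul] at hσ' ⊢
    rw [Finset.sum_comm]
    exact sub_nonneg.mpr hσ'
  convert hρ.re_sum_trace_mul_le_guessProb_of_sum_le_one hW hW1 using 3 with x
  simp only [W, Finset.sum_mul, Matrix.trace_sum, trace_dualMap_mul]

end Instrument

section Authentication

variable {X Z E B₂ C : Type} [Fintype X] [Fintype Z] [Fintype E]
  [Fintype B₂] [DecidableEq B₂] [Fintype C] [DecidableEq C]
  {Φ : Z → Matrix E E ℂ →ₗ[ℂ] Matrix (B₂ × C) (B₂ × C) ℂ} {ρ : X → Matrix E E ℂ}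
  {V : X → Z → Matrix B₂ B₂ ℂ} {M : Z → X → Matrix C C ℂ}

lemma IsSubInstrument.re_guess_fresh_uniform_le (hΦ : IsSubInstrument Φ) (hρ : IsCQState ρ)
    (hV : ∀ x z, V x z ≤ 1) (hM : ∀ z, IsPOVM (M z)) :
    (∑ x, ∑ z, (M z x * ((Fintype.card X : ℝ)⁻¹ •
      ∑ θ, ptr ((V θ z ⊗ₖ (1 : Matrix C C ℂ)) * Φ z (ρ θ)))).trace).re ≤
      (Fintype.card X : ℝ)⁻¹ := by
  have hA : ∀ z θ, V θ z ⊗ₖ (1 : Matrix C C ℂ) ≤ 1 := fun z θ =>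
    Matrix.one_kronecker_one (m := B₂) (n := C) (α := ℂ) ▸
      Matrix.kronecker_le_kronecker_left (hV θ z) Matrix.PosSemidef.one
  rw [Finset.sum_comm]
  simp only [(hM _).sum_trace_mul, Matrix.trace_smul, Matrix.trace_sum, trace_ptr,
    ← Finset.smul_sum, Complex.smul_re]
  exact mul_le_of_le_one_right (by positivity)
    (Complex.le_def.mp (hΦ.sum_trace_mul_le_one hρ hA)).1

lemma IsSubInstrument.re_guess_accepted_le_guessProb [DecidableEq E] (hΦ : IsSubInstrument Φ)
    (hρ : IsCQState ρ) (hV₀ : ∀ x z, (V x z).PosSemidef) (hV₁ : ∀ x z, V x z ≤ 1)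
    (hM : ∀ z, IsPOVM (M z)) :
    (∑ x, ∑ z, (M z x * ptr ((V x z ⊗ₖ (1 : Matrix C C ℂ)) * Φ z (ρ x))).trace).re ≤
      guessProb ρ := by
  simp only [trace_mul_ptr, ← mul_assoc, ← Matrix.mul_kronecker_mul, one_mul, mul_one]
  refine hΦ.re_sum_trace_mul_le_guessProb hρ (fun z x => (hV₀ x z).kronecker ((hM z).1 x))
    fun z => ?_
  calc ∑ x, V x z ⊗ₖ M z x ≤ ∑ x, (1 : Matrix B₂ B₂ ℂ) ⊗ₖ M z x :=
        Finset.sum_le_sum fun x _ => Matrix.kronecker_le_kronecker_left (hV₁ x z) ((hM z).1 x)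
    _ = 1 := by rw [← Matrix.kronecker_sum, (hM z).2, Matrix.one_kronecker_one]

end Authentication

/-- Eve's attack as seen from `E`: the tag is `t` with probability `p t`, and `Q t` acts on the
maximally mixed qubits `B∘` together with `E`. -/
noncomputable def attackInstrument {T B E F : Type} [Fintype B] [DecidableEq B]
    (p : T → ℝ) (Q : T → (Matrix (B × E) (B × E) ℂ →ₗ[ℂ] Matrix F F ℂ)) (t : T) :
    Matrix E E ℂ →ₗ[ℂ] Matrix F F ℂ :=
  Q t ∘ₗ ((p t * (Fintype.card B : ℝ)⁻¹) • Matrix.kroneckerBilinear (R := ℂ) 1)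

lemma attackInstrument_apply {T B E F : Type} [Fintype B] [DecidableEq B]
    (p : T → ℝ) (Q : T → (Matrix (B × E) (B × E) ℂ →ₗ[ℂ] Matrix F F ℂ)) (t : T)
    (ρ : Matrix E E ℂ) :
    attackInstrument p Q t ρ = Q t ((p t * (Fintype.card B : ℝ)⁻¹) • ((1 : Matrix B B ℂ) ⊗ₖ ρ)) :=
  rfl

lemma isSubInstrument_attackInstrument {T B E F : Type} [Fintype T] [Fintype B] [DecidableEq B]
    [Fintype E] [DecidableEq E] [Fintype F] [DecidableEq F] {p : T → ℝ} (hp : ∀ t, 0 ≤ p t)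
    (hp1 : ∑ t, p t = 1) {Q : T → (Matrix (B × E) (B × E) ℂ →ₗ[ℂ] Matrix F F ℂ)}
    (hQ : ∀ t, IsCPTP (Q t)) : IsSubInstrument (attackInstrument p Q) := by
  refine ⟨fun t ρ hρ => ?_, fun ρ hρ => ?_⟩
  · rw [attackInstrument_apply]
    exact (hQ t).posSemidef_map ((Matrix.PosSemidef.one.kronecker hρ).smul
      (mul_nonneg (hp t) (by positivity)))
  · simp only [attackInstrument_apply, (hQ _).2, Matrix.trace_smul, Matrix.trace_kronecker,
      Matrix.trace_one, ← Finset.sum_smul, ← Finset.sum_mul, hp1, one_mul]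
    rw [Complex.real_smul, ← mul_assoc]
    rcases (Fintype.card B).eq_zero_or_pos with hB | hB
    · simpa [hB] using hρ.trace_nonneg
    · rw [Complex.ofReal_inv, Complex.ofReal_natCast, inv_mul_cancel₀ (by exact_mod_cast hB.ne'),
        one_mul]

theorem recycled_basis_key_guess_general {𝒞 T E B B2 Cc : Type}
    [Fintype 𝒞] [Fintype T]
    [Fintype E] [DecidableEq E] [Fintype B] [DecidableEq B]
    [Fintype B2] [DecidableEq B2] [Fintype Cc] [DecidableEq Cc]
    (ρΘE : 𝒞 → Matrix E E ℂ) (hρ : IsCQState ρΘE)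
    (pT : T → ℝ) (hpT : ∀ t, 0 ≤ pT t) (hpT1 : ∑ t, pT t = 1)
    (Q : T → (Matrix (B × E) (B × E) ℂ →ₗ[ℂ] Matrix (B2 × Cc) (B2 × Cc) ℂ))
    (hQ : ∀ t, IsCPTP (Q t))
    (V : 𝒞 → T → Fin 2 → Matrix B2 B2 ℂ) (hV : ∀ θ t, IsPOVM (V θ t)) :
    guessProbC (fun (θ' : 𝒞) (td : T × Fin 2) =>
        if td.2 = 1 then
          ptr ((V θ' td.1 1 ⊗ₖ (1 : Matrix Cc Cc ℂ)) *
            Q td.1 ((pT td.1 * (Fintype.card B : ℝ)⁻¹) • ((1 : Matrix B B ℂ) ⊗ₖ ρΘE θ')))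
        else
          (Fintype.card 𝒞 : ℝ)⁻¹ • ∑ θ : 𝒞,
            ptr ((V θ td.1 0 ⊗ₖ (1 : Matrix Cc Cc ℂ)) *
              Q td.1 ((pT td.1 * (Fintype.card B : ℝ)⁻¹) •
                ((1 : Matrix B B ℂ) ⊗ₖ ρΘE θ)))) ≤
      (Fintype.card 𝒞 : ℝ)⁻¹ + guessProb ρΘE := by
  have hΦ := isSubInstrument_attackInstrument hpT hpT1 hQ
  refine Real.sSup_le (fun g ⟨M, hM, hg⟩ => hg ▸ ?_)
    (add_nonneg (by positivity) hρ.guessProb_nonneg)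
  simp only [← attackInstrument_apply pT Q, Fintype.sum_prod_type, Fin.sum_univ_two,
    zero_ne_one, if_false, if_true, Finset.sum_add_distrib, Complex.add_re]
  exact add_le_add
    (hΦ.re_guess_fresh_uniform_le hρ (fun θ t => (hV θ t).le_one 0) fun t => hM (t, 0))
    (hΦ.re_guess_accepted_le_guessProb hρ (fun θ t => (hV θ t).1 1) (fun θ t => (hV θ t).le_one 1)
      fun t => hM (t, 1))

/-- guessing-probability bound on the recycled basis key. `Θ'` is a fresh
uniform element of `C` if Bob rejects (`d = 0`) and equals `Θ` if he accepts (`d = 1`);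
the tag `T` is independent of `(Θ, B∘, E)`, the qubits `B∘` are maximally mixed and
independent of `(Θ, E)`, Eve processes `(T, B∘, E)` by CPTP maps, and Bob measures his
received system with a POVM controlled by `(Θ, T)`.  Then
`Guess(Θ'|T D C) ≤ 1/|C| + Guess(Θ|E)`. -/
theorem recycled_basis_key_guess {𝒞 T E B B2 Cc : Type}
    [Fintype 𝒞] [DecidableEq 𝒞] [Fintype T] [DecidableEq T]
    [Fintype E] [DecidableEq E] [Fintype B] [DecidableEq B]
    [Fintype B2] [DecidableEq B2] [Fintype Cc] [DecidableEq Cc]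
    (ρΘE : 𝒞 → Matrix E E ℂ) (hρ : IsCQState ρΘE)
    (pT : T → ℝ) (hpT : ∀ t, 0 ≤ pT t) (hpT1 : ∑ t, pT t = 1)
    (Q : T → (Matrix (B × E) (B × E) ℂ →ₗ[ℂ] Matrix (B2 × Cc) (B2 × Cc) ℂ))
    (hQ : ∀ t, IsCPTP (Q t))
    (V : 𝒞 → T → Fin 2 → Matrix B2 B2 ℂ) (hV : ∀ θ t, IsPOVM (V θ t)) :
    guessProbC (fun (θ' : 𝒞) (td : T × Fin 2) =>
        if td.2 = 1 then
          ptr ((V θ' td.1 1 ⊗ₖ (1 : Matrix Cc Cc ℂ)) *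
            Q td.1 ((pT td.1 * (Fintype.card B : ℝ)⁻¹) • ((1 : Matrix B B ℂ) ⊗ₖ ρΘE θ')))
        else
          (Fintype.card 𝒞 : ℝ)⁻¹ • ∑ θ : 𝒞,
            ptr ((V θ td.1 0 ⊗ₖ (1 : Matrix Cc Cc ℂ)) *
              Q td.1 ((pT td.1 * (Fintype.card B : ℝ)⁻¹) •
                ((1 : Matrix B B ℂ) ⊗ₖ ρΘE θ)))) ≤
      (Fintype.card 𝒞 : ℝ)⁻¹ + guessProb ρΘE :=
  recycled_basis_key_guess_general ρΘE hρ pT hpT hpT1 Q hQ V hV
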